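/- Let π be a signed permutation all of whose strips are positive (equivalently, all elements of π have sign '+'). Then: (i) for every reversal ρ, b(π·ρ) ≥ b(π); (ii) for every inverse transposition β, b(π·β) ≥ b(π) − 1; (iii) for every revrev β, b(π·β) ≥ b(π) − 1. -/

import Mathlib

/-!
Cut `π` and `π'` at the pairs of positions where the blocks moved by the operation meet. Inside a
block the number of breakpoints does not change: a block that is only moved keeps its breakpoints,
and one that is reversed and negated has them mirrored, since
`-π_{c-q-1} - (-π_{c-q}) = π_{c-q} - π_{c-q-1}`. So only the junction pairs matter, and `π` has
at most one breakpoint at each of them. As all entries of `π` are positive, a junction of `π'`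
between a negated block and an unnegated one is always a breakpoint (its difference is negative
or at least `2`). A reversal has two junctions, both of this kind; an inverse transposition or a
revrev has three, at least two of this kind.
-/

/-- The four kinds of rearrangement operations considered:
reversals, transpositions, inverse transpositions and revrevs. -/
inductive RearrOp : Type
  | rev
  | transp
  | invtransp
  | revrev
deriving DecidableEq

/-- `π` is (the extended version of) a signed permutation of size `n`:
`π 0 = +0`, `π (n+1) = +(n+1)`, and on positions `1, …, n` the values have pairwise
distinct absolute values lying in `{1, …, n}`. -/
def IsSPerm (n : ℕ) (π : ℕ → ℤ) : Prop :=
  π 0 = 0 ∧ π (n + 1) = (n : ℤ) + 1 ∧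
  (∀ i : ℕ, 1 ≤ i → i ≤ n → 1 ≤ |π i| ∧ |π i| ≤ (n : ℤ)) ∧
  (∀ i j : ℕ, 1 ≤ i → i ≤ n → 1 ≤ j → j ≤ n → |π i| = |π j| → i = j)

/-- `π` is (the extended version of) an unsigned permutation of size `n`. -/
def IsUPerm (n : ℕ) (π : ℕ → ℕ) : Prop :=
  π 0 = 0 ∧ π (n + 1) = n + 1 ∧
  (∀ i : ℕ, 1 ≤ i → i ≤ n → 1 ≤ π i ∧ π i ≤ n) ∧
  (∀ i j : ℕ, 1 ≤ i → i ≤ n → 1 ≤ j → j ≤ n → π i = π j → i = j)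

/-- Signed reversal `ρ(i,j)`, `1 ≤ i ≤ j ≤ n`: replaces `(π_i … π_j)` by `(−π_j … −π_i)`. -/
def SRev (n : ℕ) (π π' : ℕ → ℤ) : Prop :=
  ∃ i j : ℕ, 1 ≤ i ∧ i ≤ j ∧ j ≤ n ∧
    (∀ p : ℕ, i ≤ p → p ≤ j → π' p = - π (i + j - p)) ∧
    (∀ p : ℕ, p < i ∨ j < p → π' p = π p)

/-- Transposition `τ(i,j,k)`, `1 ≤ i < j < k ≤ n+1`: exchanges the adjacent segments
`(π_i … π_{j−1})` and `(π_j … π_{k−1})`. -/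
def STransp (n : ℕ) (π π' : ℕ → ℤ) : Prop :=
  ∃ i j k : ℕ, 1 ≤ i ∧ i < j ∧ j < k ∧ k ≤ n + 1 ∧
    (∀ p : ℕ, i ≤ p → p < i + (k - j) → π' p = π (p + (j - i))) ∧
    (∀ p : ℕ, i + (k - j) ≤ p → p < k → π' p = π (p - (k - j))) ∧
    (∀ p : ℕ, p < i ∨ k ≤ p → π' p = π p)

/-- Signed inverse transposition (type 1 or type 2): exchanges the two adjacent segments
`(π_i … π_{j−1})` and `(π_j … π_{k−1})` and additionally reverses (and negates) one of them. -/
def SInvTransp (n : ℕ) (π π' : ℕ → ℤ) : Prop :=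
  ∃ i j k : ℕ, 1 ≤ i ∧ i < j ∧ j < k ∧ k ≤ n + 1 ∧
    (((∀ p : ℕ, i ≤ p → p < i + (k - j) → π' p = π (p + (j - i))) ∧
      (∀ p : ℕ, i + (k - j) ≤ p → p < k → π' p = - π (i + k - 1 - p))) ∨
     ((∀ p : ℕ, i ≤ p → p < i + (k - j) → π' p = - π (i + k - 1 - p)) ∧
      (∀ p : ℕ, i + (k - j) ≤ p → p < k → π' p = π (p - (k - j))))) ∧
    (∀ p : ℕ, p < i ∨ k ≤ p → π' p = π p)

/-- Signed revrev `ρρ(i,j,k)`: reverses (and negates) each of the two adjacent segments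
`(π_i … π_{j−1})` and `(π_j … π_{k−1})` in place, without exchanging them. -/
def SRevRev (n : ℕ) (π π' : ℕ → ℤ) : Prop :=
  ∃ i j k : ℕ, 1 ≤ i ∧ i < j ∧ j < k ∧ k ≤ n + 1 ∧
    (∀ p : ℕ, i ≤ p → p < j → π' p = - π (i + j - 1 - p)) ∧
    (∀ p : ℕ, j ≤ p → p < k → π' p = - π (j + k - 1 - p)) ∧
    (∀ p : ℕ, p < i ∨ k ≤ p → π' p = π p)

/-- Unsigned reversal `ρ(i,j)`. -/
def URev (n : ℕ) (π π' : ℕ → ℕ) : Prop :=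
  ∃ i j : ℕ, 1 ≤ i ∧ i ≤ j ∧ j ≤ n ∧
    (∀ p : ℕ, i ≤ p → p ≤ j → π' p = π (i + j - p)) ∧
    (∀ p : ℕ, p < i ∨ j < p → π' p = π p)

/-- Unsigned transposition `τ(i,j,k)`. -/
def UTransp (n : ℕ) (π π' : ℕ → ℕ) : Prop :=
  ∃ i j k : ℕ, 1 ≤ i ∧ i < j ∧ j < k ∧ k ≤ n + 1 ∧
    (∀ p : ℕ, i ≤ p → p < i + (k - j) → π' p = π (p + (j - i))) ∧
    (∀ p : ℕ, i + (k - j) ≤ p → p < k → π' p = π (p - (k - j))) ∧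
    (∀ p : ℕ, p < i ∨ k ≤ p → π' p = π p)

/-- Unsigned inverse transposition (type 1 or type 2). -/
def UInvTransp (n : ℕ) (π π' : ℕ → ℕ) : Prop :=
  ∃ i j k : ℕ, 1 ≤ i ∧ i < j ∧ j < k ∧ k ≤ n + 1 ∧
    (((∀ p : ℕ, i ≤ p → p < i + (k - j) → π' p = π (p + (j - i))) ∧
      (∀ p : ℕ, i + (k - j) ≤ p → p < k → π' p = π (i + k - 1 - p))) ∨
     ((∀ p : ℕ, i ≤ p → p < i + (k - j) → π' p = π (i + k - 1 - p)) ∧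
      (∀ p : ℕ, i + (k - j) ≤ p → p < k → π' p = π (p - (k - j))))) ∧
    (∀ p : ℕ, p < i ∨ k ≤ p → π' p = π p)

/-- Unsigned revrev `ρρ(i,j,k)`. -/
def URevRev (n : ℕ) (π π' : ℕ → ℕ) : Prop :=
  ∃ i j k : ℕ, 1 ≤ i ∧ i < j ∧ j < k ∧ k ≤ n + 1 ∧
    (∀ p : ℕ, i ≤ p → p < j → π' p = π (i + j - 1 - p)) ∧
    (∀ p : ℕ, j ≤ p → p < k → π' p = π (j + k - 1 - p)) ∧
    (∀ p : ℕ, p < i ∨ k ≤ p → π' p = π p)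

def sOpRel (n : ℕ) : RearrOp → (ℕ → ℤ) → (ℕ → ℤ) → Prop
  | RearrOp.rev => SRev n
  | RearrOp.transp => STransp n
  | RearrOp.invtransp => SInvTransp n
  | RearrOp.revrev => SRevRev n

def uOpRel (n : ℕ) : RearrOp → (ℕ → ℕ) → (ℕ → ℕ) → Prop
  | RearrOp.rev => URev n
  | RearrOp.transp => UTransp n
  | RearrOp.invtransp => UInvTransp n
  | RearrOp.revrev => URevRev n

/-- The list of operations `l` transforms the signed permutation `π` into the identity. -/
def SSorts (n : ℕ) : List RearrOp → (ℕ → ℤ) → Prop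
  | [], π => ∀ p : ℕ, p ≤ n + 1 → π p = (p : ℤ)
  | op :: l, π => ∃ π' : ℕ → ℤ, sOpRel n op π π' ∧ SSorts n l π'

/-- The list of operations `l` transforms the unsigned permutation `π` into the identity. -/
def USorts (n : ℕ) : List RearrOp → (ℕ → ℕ) → Prop
  | [], π => ∀ p : ℕ, p ≤ n + 1 → π p = p
  | op :: l, π => ∃ π' : ℕ → ℕ, uOpRel n op π π' ∧ USorts n l π'

/-- A sequence of `s` (unsigned) transpositions transforms `π` into the identity. -/
def UTranspSorts (n : ℕ) : ℕ → (ℕ → ℕ) → Prop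
  | 0, π => ∀ p : ℕ, p ≤ n + 1 → π p = p
  | s + 1, π => ∃ π' : ℕ → ℕ, UTransp n π π' ∧ UTranspSorts n s π'

/-- The cost of an operation: `wr` for a reversal, `wt` for a transposition,
inverse transposition or revrev. -/
noncomputable def opCost (wr wt : ℝ) (op : RearrOp) : ENNReal :=
  if op = RearrOp.rev then ENNReal.ofReal wr else ENNReal.ofReal wt

/-- The total cost of a sequence of operations. -/
noncomputable def seqCost (wr wt : ℝ) (l : List RearrOp) : ENNReal :=
  (l.map (opCost wr wt)).sum

/-- The weighted distance `d^w_M(π)` for a signed permutation `π`: the minimum total cost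
of a sequence of operations from the model `M` transforming `π` into the identity
(`∞` if no such sequence exists). -/
noncomputable def sWDist (n : ℕ) (M : Set RearrOp) (wr wt : ℝ) (π : ℕ → ℤ) : ENNReal :=
  sInf {c : ENNReal |
    ∃ l : List RearrOp, (∀ op ∈ l, op ∈ M) ∧ SSorts n l π ∧ c = seqCost wr wt l}

/-- The weighted distance `d^w_M(π)` for an unsigned permutation `π`. -/
noncomputable def uWDist (n : ℕ) (M : Set RearrOp) (wr wt : ℝ) (π : ℕ → ℕ) : ENNReal :=
  sInf {c : ENNReal |
    ∃ l : List RearrOp, (∀ op ∈ l, op ∈ M) ∧ USorts n l π ∧ c = seqCost wr wt l}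

/-- `b(π)`: number of (signed) breakpoints of the signed permutation `π`. -/
def bS (n : ℕ) (π : ℕ → ℤ) : ℕ :=
  ((Finset.range (n + 1)).filter (fun i => π (i + 1) - π i ≠ 1)).card

/-- `b(π)`: number of unsigned-reversal breakpoints, i.e. pairs with `|π_{i+1} − π_i| ≠ 1`. -/
def bU (n : ℕ) (π : ℕ → ℕ) : ℕ :=
  ((Finset.range (n + 1)).filter
    (fun i => ¬ (π (i + 1) = π i + 1 ∨ π i = π (i + 1) + 1))).card

/-- `b_τ(π)`: number of transposition breakpoints, i.e. pairs with `π_{i+1} − π_i ≠ 1`. -/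
def bTU (n : ℕ) (π : ℕ → ℕ) : ℕ :=
  ((Finset.range (n + 1)).filter (fun i => π (i + 1) ≠ π i + 1)).card

def M1 : Set RearrOp := {RearrOp.transp, RearrOp.invtransp}
def M2 : Set RearrOp := {RearrOp.rev, RearrOp.transp, RearrOp.invtransp}
def M3 : Set RearrOp := {RearrOp.transp, RearrOp.revrev}
def M4 : Set RearrOp := {RearrOp.rev, RearrOp.transp, RearrOp.revrev}
def M5 : Set RearrOp := {RearrOp.transp, RearrOp.invtransp, RearrOp.revrev}
def M6 : Set RearrOp := {RearrOp.rev, RearrOp.transp, RearrOp.invtransp, RearrOp.revrev}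

def bSIco (π : ℕ → ℤ) (a b : ℕ) : ℕ :=
  ∑ q ∈ Finset.Ico a b, if π (q + 1) - π q = 1 then 0 else 1

section Breakpoints

variable {π π' : ℕ → ℤ} {a b c : ℕ}

lemma bS_eq_bSIco (n : ℕ) (π : ℕ → ℤ) : bS n π = bSIco π 0 (n + 1) := by
  rw [bS, Finset.card_filter, bSIco, Finset.range_eq_Ico]
  refine Finset.sum_congr rfl fun q _ => ?_
  split_ifs <;> simp_all

lemma bSIco_add (π : ℕ → ℤ) (hab : a ≤ b) (hbc : b ≤ c) :
    bSIco π a b + bSIco π b c = bSIco π a c :=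
  Finset.sum_Ico_consecutive _ hab hbc

lemma bSIco_split (π : ℕ → ℤ) (hac : a ≤ c) (hcb : c < b) :
    bSIco π a b = bSIco π a c + bSIco π c (c + 1) + bSIco π (c + 1) b := by
  rw [bSIco_add π hac (Nat.le_add_right c 1), bSIco_add π (by omega) hcb]

lemma bSIco_eq_ends (π : ℕ → ℤ) (hab : a < b) :
    bSIco π a (b + 1) = bSIco π a (a + 1) + bSIco π (a + 1) b + bSIco π b (b + 1) := by
  rw [bSIco_add π (Nat.le_add_right a 1) hab, bSIco_add π hab.le (Nat.le_add_right b 1)]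

lemma bSIco_succ_le (π : ℕ → ℤ) (q : ℕ) : bSIco π q (q + 1) ≤ 1 := by
  simp only [bSIco, Nat.Ico_succ_singleton, Finset.sum_singleton]
  split_ifs <;> omega

lemma bSIco_succ_eq_one {q : ℕ} (h : π (q + 1) - π q ≠ 1) : bSIco π q (q + 1) = 1 := by
  simp [bSIco, h]

lemma bSIco_succ_eq_one_of_nonneg_of_neg {q : ℕ} (h₁ : 0 ≤ π q) (h₂ : π (q + 1) < 0) :
    bSIco π q (q + 1) = 1 :=
  bSIco_succ_eq_one (by omega)

lemma bSIco_succ_eq_one_of_neg_of_pos {q : ℕ} (h₁ : π q < 0) (h₂ : 0 < π (q + 1)) :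
    bSIco π q (q + 1) = 1 :=
  bSIco_succ_eq_one (by omega)

lemma bSIco_of_eq_shift {d : ℕ} (h : ∀ p, a ≤ p → p ≤ b → π' p = π (p + d)) :
    bSIco π' a b = bSIco π (a + d) (b + d) := by
  rw [bSIco, bSIco, ← Finset.sum_Ico_add']
  refine Finset.sum_congr rfl fun q hq => ?_
  rw [Finset.mem_Ico] at hq
  rw [h q hq.1 (by omega), h (q + 1) (by omega) (by omega), Nat.add_right_comm]

lemma bSIco_congr (h : ∀ p, a ≤ p → p ≤ b → π' p = π p) :
    bSIco π' a b = bSIco π a b :=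
  bSIco_of_eq_shift (d := 0) h

lemma bSIco_of_eq_sub {d : ℕ} (hda : d ≤ a) (hab : a ≤ b)
    (h : ∀ p, a ≤ p → p ≤ b → π' p = π (p - d)) :
    bSIco π' a b = bSIco π (a - d) (b - d) := by
  rw [bSIco_of_eq_shift (π := π') (π' := π) (d := d) fun p _ _ => by
    rw [h (p + d) (by omega) (by omega), Nat.add_sub_cancel],
    Nat.sub_add_cancel hda, Nat.sub_add_cancel (hda.trans hab)]

lemma bSIco_of_eq_neg_reflect (hbc : b < c)
    (h : ∀ p, a ≤ p → p ≤ b → π' p = -π (c - p)) :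
    bSIco π' a b = bSIco π (c - b) (c - a) := by
  obtain ⟨c, rfl⟩ : ∃ m, c = m + 1 := ⟨c - 1, by omega⟩
  rw [bSIco, bSIco, ← Finset.sum_Ico_reflect _ _ (by omega : b ≤ c + 1)]
  refine Finset.sum_congr rfl fun q hq => ?_
  rw [Finset.mem_Ico] at hq
  rw [h q hq.1 (by omega), h (q + 1) (by omega) (by omega),
    show c + 1 - q = c - q + 1 by omega, show c + 1 - (q + 1) = c - q by omega, neg_sub_neg]

lemma bS_le_bS_add_of_eq_outside {n x z : ℕ} (hxz : x ≤ z) (hz : z ≤ n)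
    (hout : ∀ p, p ≤ x ∨ z + 1 ≤ p → π' p = π p)
    (hloc : bSIco π x (z + 1) ≤ bSIco π' x (z + 1) + c) : bS n π ≤ bS n π' + c := by
  have hsplit : ∀ ρ : ℕ → ℤ,
      bS n ρ = bSIco ρ 0 x + bSIco ρ x (z + 1) + bSIco ρ (z + 1) (n + 1) := fun ρ => by
    rw [bS_eq_bSIco, bSIco_add ρ (Nat.zero_le x) (by omega), bSIco_add ρ (by omega) (by omega)]
  have hleft : bSIco π' 0 x = bSIco π 0 x := bSIco_congr fun p _ hp => hout p (.inl hp)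
  have hright : bSIco π' (z + 1) (n + 1) = bSIco π (z + 1) (n + 1) :=
    bSIco_congr fun p hp _ => hout p (.inr hp)
  rw [hsplit π, hsplit π']
  omega

lemma bSIco_le_bSIco_add_one_of_cuts {x y w z : ℕ} (hxy : x < y) (hyz : y < z) (hxw : x < w)
    (hwz : w < z)
    (h : bSIco π (x + 1) y + bSIco π (y + 1) z + 2 ≤ bSIco π' x (x + 1) + bSIco π' (x + 1) w +
      bSIco π' w (w + 1) + bSIco π' (w + 1) z + bSIco π' z (z + 1)) :
    bSIco π x (z + 1) ≤ bSIco π' x (z + 1) + 1 := by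
  rw [bSIco_eq_ends π (hxy.trans hyz), bSIco_eq_ends π' (hxy.trans hyz),
    bSIco_split π (a := x + 1) hxy hyz, bSIco_split π' (a := x + 1) hxw hwz]
  have := bSIco_succ_le π x
  have := bSIco_succ_le π y
  have := bSIco_succ_le π z
  omega

end Breakpoints

def AllPositive (n : ℕ) (π : ℕ → ℤ) : Prop :=
  0 ≤ π 0 ∧ ∀ p, 1 ≤ p → p ≤ n + 1 → 0 < π p

namespace AllPositive

variable {n : ℕ} {π π' : ℕ → ℤ}

lemma of_isSPerm (hπ : IsSPerm n π) (hpos : ∀ i : ℕ, 1 ≤ i → i ≤ n → 0 < π i) :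
    AllPositive n π := by
  obtain ⟨h0, hn1, -, -⟩ := hπ
  refine ⟨h0.ge, fun p hp₁ hp => ?_⟩
  rcases hp.lt_or_eq with hp | rfl
  · exact hpos p hp₁ (by omega)
  · rw [hn1]
    positivity

lemma nonneg (hπ : AllPositive n π) {p : ℕ} (hp : p ≤ n + 1) : 0 ≤ π p := by
  rcases Nat.eq_zero_or_pos p with rfl | h
  · exact hπ.1
  · exact (hπ.2 p h hp).le

lemma neg_lt_zero (hπ : AllPositive n π) {p : ℕ} (hp₁ : 1 ≤ p) (hp : p ≤ n + 1) :
    -π p < 0 :=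
  neg_neg_iff_pos.mpr (hπ.2 p hp₁ hp)

theorem bS_le_bS_of_SRev (hπ : AllPositive n π) (h : SRev n π π') : bS n π ≤ bS n π' := by
  obtain ⟨i, j, hi, hij, hjn, hin, hout⟩ := h
  obtain ⟨x, rfl⟩ : ∃ x, i = x + 1 := ⟨i - 1, by omega⟩
  refine bS_le_bS_add_of_eq_outside (c := 0) (x := x) (by omega) hjn
    (fun p hp => hout p (by omega)) ?_
  have hmid : bSIco π' (x + 1) j = bSIco π (x + 1) j := by
    rw [bSIco_of_eq_neg_reflect (by omega) hin]
    congr 1 <;> omega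
  have hcut₁ : bSIco π' x (x + 1) = 1 := bSIco_succ_eq_one_of_nonneg_of_neg
    (by rw [hout x (by omega)]; exact hπ.nonneg (by omega))
    (by rw [hin (x + 1) le_rfl (by omega)]; exact hπ.neg_lt_zero (by omega) (by omega))
  have hcut₂ : bSIco π' j (j + 1) = 1 := bSIco_succ_eq_one_of_neg_of_pos
    (by rw [hin j hij le_rfl]; exact hπ.neg_lt_zero (by omega) (by omega))
    (by rw [hout (j + 1) (by omega)]; exact hπ.2 _ (by omega) (by omega))
  rw [bSIco_eq_ends π hij, bSIco_eq_ends π' hij]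
  have := bSIco_succ_le π x
  have := bSIco_succ_le π j
  omega

theorem bS_le_bS_add_one_of_SInvTransp (hπ : AllPositive n π) (h : SInvTransp n π π') :
    bS n π ≤ bS n π' + 1 := by
  obtain ⟨i, j, k, hi, hij, hjk, hkn, hblocks, hout⟩ := h
  obtain ⟨x, rfl⟩ : ∃ x, i = x + 1 := ⟨i - 1, by omega⟩
  obtain ⟨y, rfl⟩ : ∃ y, j = y + 1 := ⟨j - 1, by omega⟩
  obtain ⟨z, rfl⟩ : ∃ z, k = z + 1 := ⟨k - 1, by omega⟩
  refine bS_le_bS_add_of_eq_outside (x := x) (z := z) (by omega) (by omega)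
    (fun p hp => hout p (by omega)) ?_
  -- `x + z - y + 1` is where the second block of `π'` starts
  refine bSIco_le_bSIco_add_one_of_cuts (y := y) (w := x + z - y) (by omega) (by omega) (by omega)
    (by omega) ?_
  rcases hblocks with ⟨hfst, hsnd⟩ | ⟨hfst, hsnd⟩
  · have hfst' : bSIco π' (x + 1) (x + z - y) = bSIco π (y + 1) z := by
      rw [bSIco_of_eq_shift fun p hp hp' => hfst p hp (by omega)]
      congr 1 <;> omega
    have hsnd' : bSIco π' (x + z - y + 1) z = bSIco π (x + 1) y := by
      rw [bSIco_of_eq_neg_reflect (by omega) fun p hp hp' => hsnd p (by omega) (by omega)]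
      congr 1 <;> omega
    have hcut₂ : bSIco π' (x + z - y) (x + z - y + 1) = 1 := bSIco_succ_eq_one_of_nonneg_of_neg
      (by rw [hfst _ (by omega) (by omega)]; exact hπ.nonneg (by omega))
      (by rw [hsnd _ (by omega) (by omega)]; exact hπ.neg_lt_zero (by omega) (by omega))
    have hcut₃ : bSIco π' z (z + 1) = 1 := bSIco_succ_eq_one_of_neg_of_pos
      (by rw [hsnd z (by omega) (by omega)]; exact hπ.neg_lt_zero (by omega) (by omega))
      (by rw [hout (z + 1) (by omega)]; exact hπ.2 _ (by omega) (by omega))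
    omega
  · have hfst' : bSIco π' (x + 1) (x + z - y) = bSIco π (y + 1) z := by
      rw [bSIco_of_eq_neg_reflect (by omega) fun p hp hp' => hfst p hp (by omega)]
      congr 1 <;> omega
    have hsnd' : bSIco π' (x + z - y + 1) z = bSIco π (x + 1) y := by
      rw [bSIco_of_eq_sub (by omega) (by omega) fun p hp hp' => hsnd p (by omega) (by omega)]
      congr 1 <;> omega
    have hcut₁ : bSIco π' x (x + 1) = 1 := bSIco_succ_eq_one_of_nonneg_of_neg
      (by rw [hout x (by omega)]; exact hπ.nonneg (by omega))
      (by rw [hfst (x + 1) le_rfl (by omega)]; exact hπ.neg_lt_zero (by omega) (by omega))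
    have hcut₂ : bSIco π' (x + z - y) (x + z - y + 1) = 1 := bSIco_succ_eq_one_of_neg_of_pos
      (by rw [hfst _ (by omega) (by omega)]; exact hπ.neg_lt_zero (by omega) (by omega))
      (by rw [hsnd _ (by omega) (by omega)]; exact hπ.2 _ (by omega) (by omega))
    omega

theorem bS_le_bS_add_one_of_SRevRev (hπ : AllPositive n π) (h : SRevRev n π π') :
    bS n π ≤ bS n π' + 1 := by
  obtain ⟨i, j, k, hi, hij, hjk, hkn, hfst, hsnd, hout⟩ := h
  obtain ⟨x, rfl⟩ : ∃ x, i = x + 1 := ⟨i - 1, by omega⟩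
  obtain ⟨y, rfl⟩ : ∃ y, j = y + 1 := ⟨j - 1, by omega⟩
  obtain ⟨z, rfl⟩ : ∃ z, k = z + 1 := ⟨k - 1, by omega⟩
  refine bS_le_bS_add_of_eq_outside (x := x) (z := z) (by omega) (by omega)
    (fun p hp => hout p (by omega)) ?_
  have hfst' : bSIco π' (x + 1) y = bSIco π (x + 1) y := by
    rw [bSIco_of_eq_neg_reflect (by omega) fun p hp hp' => hfst p hp (by omega)]
    congr 1 <;> omega
  have hsnd' : bSIco π' (y + 1) z = bSIco π (y + 1) z := by
    rw [bSIco_of_eq_neg_reflect (by omega) fun p hp hp' => hsnd p hp (by omega)]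
    congr 1 <;> omega
  have hcut₁ : bSIco π' x (x + 1) = 1 := bSIco_succ_eq_one_of_nonneg_of_neg
    (by rw [hout x (by omega)]; exact hπ.nonneg (by omega))
    (by rw [hfst (x + 1) le_rfl (by omega)]; exact hπ.neg_lt_zero (by omega) (by omega))
  have hcut₃ : bSIco π' z (z + 1) = 1 := bSIco_succ_eq_one_of_neg_of_pos
    (by rw [hsnd z (by omega) (by omega)]; exact hπ.neg_lt_zero (by omega) (by omega))
    (by rw [hout (z + 1) (by omega)]; exact hπ.2 _ (by omega) (by omega))
  refine bSIco_le_bSIco_add_one_of_cuts (y := y) (w := y) (by omega) (by omega) (by omega)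
    (by omega) ?_
  omega

end AllPositive

/-- Let `π` be a signed permutation all of whose strips are positive
(equivalently, all elements of `π` have sign `+`). Then: (i) for every reversal `ρ`,
`b(π·ρ) ≥ b(π)`; (ii) for every inverse transposition `β`, `b(π·β) ≥ b(π) − 1`;
(iii) for every revrev `β`, `b(π·β) ≥ b(π) − 1`. -/
theorem signed_positive_strips_breakpoint_variation
    (n : ℕ) (π : ℕ → ℤ) (hπ : IsSPerm n π)
    (hpos : ∀ i : ℕ, 1 ≤ i → i ≤ n → 0 < π i) :
    (∀ π' : ℕ → ℤ, SRev n π π' → bS n π ≤ bS n π') ∧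
    (∀ π' : ℕ → ℤ, SInvTransp n π π' → bS n π ≤ bS n π' + 1) ∧
    (∀ π' : ℕ → ℤ, SRevRev n π π' → bS n π ≤ bS n π' + 1) := by
  have hall := AllPositive.of_isSPerm hπ hpos
  exact ⟨fun _ => hall.bS_le_bS_of_SRev, fun _ => hall.bS_le_bS_add_one_of_SInvTransp,
    fun _ => hall.bS_le_bS_add_one_of_SRevRev⟩
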